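/- Let H be Hayashi's face algebra with quasitriangular structure R (over ℂ, with parameters N ≥ 2 and a primitive N-th root of unity ω). Then the braided Hopf algebra _RH = C_H(H_s) equals the ℂ-linear span of {X^i_i(p) : i,p ∈ Z_N} (indeed 1₁X^m_n(r)S(1₂) = δ_{m,n}X^m_n(r)), and its structure maps are: multiplication X^i_i(p)X^k_k(q) = δ_{i,k}δ_{p,q}X^i_i(p); unit 1 = Σ_{i,p}X^i_i(p); comultiplication Δ'(X^k_k(s)) = Σ_{w+q=s} X^k_k(w)⊗X^k_k(q); counit ε_t(X^i_i(s)) = δ_{s,0}Σ_p X^i_i(p); antipode S̄(X^k_k(s)) = X^k_k(−s). -/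

import Mathlib

/- Hayashi's face algebra H = span{X^i_j(s) : i,j,s ∈ Z_N}, realized concretely as
the algebra of Z_N-indexed families of N×N matrices over ℂ, so that
X^i_j(p) X^k_l(q) = δ_{jk} δ_{pq} X^i_l(p) and 1 = Σ X^i_i(p). -/

open scoped TensorProduct

noncomputable section

variable (N : ℕ) [NeZero N]

/-- Hayashi's face algebra: its product `X^i_j(p)X^k_l(q) = δ_{j,k}δ_{p,q}X^i_l(p)` is
realized as `Z_N`-families of `N × N` complex matrices (`X^i_j(p)` = the elementary
matrix `E_{ij}` placed in slot `p`). -/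
abbrev FaceAlg := ZMod N → Matrix (ZMod N) (ZMod N) ℂ

/-- The basis element `X^i_j(s)` of the face algebra. -/
def X (i j s : ZMod N) : FaceAlg N := fun p =>
  if p = s then Matrix.single i j 1 else 0

/-- The antipode: `S(X^i_j(p)) = X^{j+p}_{i+p}(-p)`, extended linearly. -/
def SF : FaceAlg N → FaceAlg N := fun f s a b => f (-s) (b + s) (a + s)

/-- `ω^x` for an exponent `x ∈ Z_N`. -/
def wexp (ω : ℂ) (x : ZMod N) : ℂ := ω ^ x.val

/-- The counit: `ε(X^i_j(s)) = δ_{s,0}`, extended linearly. -/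
def epsF (f : FaceAlg N) : ℂ := ∑ i : ZMod N, ∑ j : ZMod N, f 0 i j

/-- The adjoint action of the basis element `X^i_j(s)`:
`X^i_j(s) · y = Σ_{u+v=s} X^i_j(u) y S(X^{i+u}_{j+u}(v))`. -/
def adX (i j s : ZMod N) (y : FaceAlg N) : FaceAlg N :=
  ∑ u : ZMod N, X N i j u * y * SF N (X N (i + u) (j + u) (s - u))

/-- The target map `ε_t(x) = ε(1₁ x) 1₂` (using `Δ(1) = Σ X^a_a(p) ⊗ X^{a+p}_{a+p}(q)`). -/
def etF (x : FaceAlg N) : FaceAlg N :=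
  ∑ a : ZMod N, ∑ p : ZMod N, ∑ q : ZMod N,
    (epsF N (X N a a p * x)) • X N (a + p) (a + p) q

/-- The transmutation comultiplication `Δ̄(x) = x₁ S(R²) ⊗ (R¹ · x₂)` evaluated on the
basis element `X^k_k(s)` of the centralizer, where
`R = Σ_{i,j,p} ω^{-p(i-j)} X^i_j(p) ⊗ X^j_{j+p}(i-j)` and
`Δ(X^k_k(s)) = Σ_{w+q=s} X^k_k(w) ⊗ X^{k+w}_{k+w}(q)`. -/
def comulBarX (ω : ℂ) (k s : ZMod N) : FaceAlg N ⊗[ℂ] FaceAlg N :=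
  ∑ w : ZMod N, ∑ i : ZMod N, ∑ j : ZMod N, ∑ p : ZMod N,
    (wexp N ω (-(p * (i - j)))) •
      ((X N k k w * SF N (X N j (j + p) (i - j))) ⊗ₜ[ℂ]
        adX N i j p (X N (k + w) (k + w) (s - w)))

/-- The transmutation antipode `S̄(x) = R² R'² S(R¹ x S(R'¹))` evaluated on `X^k_k(s)`. -/
def SbarX (ω : ℂ) (x : FaceAlg N) : FaceAlg N :=
  ∑ i : ZMod N, ∑ j : ZMod N, ∑ p : ZMod N,
    ∑ i' : ZMod N, ∑ j' : ZMod N, ∑ p' : ZMod N,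
      (wexp N ω (-(p * (i - j))) * wexp N ω (-(p' * (i' - j')))) •
        (X N j (j + p) (i - j) * X N j' (j' + p') (i' - j') *
          SF N (X N i j p * x * SF N (X N i' j' p')))

/-- The subalgebra `H^i = span{X^i_i(p)}`. -/
def Hi (i : ZMod N) : Submodule ℂ (FaceAlg N) :=
  Submodule.span ℂ {y | ∃ p : ZMod N, y = X N i i p}

/-!
In the model `H = (Z_N → M_N(ℂ))`, `X^i_j(s)` is the matrix unit `E_ij` in slot `s` and the
antipode transposes and shifts. Every computation then rests on two product rules:
`X^i_j(s) X^k_l(t) = δ_{jk} δ_{st} X^i_l(s)` and the sandwich rule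
`X^i_j(s) h X^k_l(t) = δ_{st} h(s)_{jk} X^i_l(s)`. The latter shows that `h ↦ 1₁ h S(1₂)` keeps
exactly the diagonal entries of `h`. In each structure map the Kronecker deltas pin down all
summation indices but one; in the antipode the two phases `ω^{s²}` and `ω^{-s²}` coming from the
two copies of `R` cancel because `ω^N = 1`.
-/

/-- The map `h ↦ 1₁ h S(1₂)` onto the centralizer `C_H(H_s)`. -/
def centralizerProj (h : FaceAlg N) : FaceAlg N :=
  ∑ i : ZMod N, ∑ p : ZMod N, ∑ q : ZMod N, X N i i p * h * SF N (X N (i + p) (i + p) q)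

variable {N}

omit [NeZero N] in
theorem X_apply (i j s p a b : ZMod N) :
    X N i j s p a b = if p = s ∧ i = a ∧ j = b then 1 else 0 := by
  by_cases h : p = s <;> simp [X, Matrix.single_apply, h]

theorem X_mul_X (i j s k l t : ZMod N) :
    X N i j s * X N k l t = if j = k ∧ s = t then X N i l s else 0 := by
  funext p
  by_cases hj : j = k <;> by_cases hs : s = t <;>
    simp [X, hj, hs, Matrix.single_mul_single_of_ne] <;> aesop

theorem X_mul_mul_X (i j s k l t : ZMod N) (h : FaceAlg N) :
    X N i j s * h * X N k l t = if s = t then h s j k • X N i l s else 0 := by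
  funext p
  by_cases hs : s = t
  · subst hs
    by_cases hp : p = s
    · simp [X, hp, Matrix.single_mul_mul_single]
    · simp [X, hp]
  · by_cases hp : p = s <;> simp [X, hs, hp]

omit [NeZero N] in
theorem SF_X (i j p : ZMod N) : SF N (X N i j p) = X N (j + p) (i + p) (-p) := by
  funext s a b
  simp only [SF, X, neg_eq_iff_eq_neg]
  split_ifs <;> simp [Matrix.single_apply, ← sub_eq_add_neg, eq_sub_iff_add_eq, and_comm, *]

omit [NeZero N] in
theorem SF_zero : SF N 0 = 0 := rfl

theorem sum_smul_X (h : FaceAlg N) : ∑ s, ∑ a, ∑ b, h s a b • X N a b s = h := by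
  funext t c d
  simp [Finset.sum_apply, X, ← Matrix.matrix_eq_sum_single]

theorem one_eq_sum_X : (1 : FaceAlg N) = ∑ i, ∑ p, X N i i p := by
  conv_lhs => rw [← sum_smul_X 1]
  rw [Finset.sum_comm]
  simp [Matrix.one_apply]

theorem X_diag_mul_X_diag (i k p q : ZMod N) :
    X N i i p * X N k k q = if i = k ∧ p = q then X N i i p else 0 := by
  rw [X_mul_X]
  split_ifs with h
  · rw [h.1]
  · rfl

theorem centralizerProj_eq_sum (h : FaceAlg N) :
    centralizerProj N h = ∑ i, ∑ p, h p i i • X N i i p := by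
  simp [centralizerProj, SF_X, X_mul_mul_X, eq_neg_iff_add_eq_zero, add_eq_zero_iff_neg_eq]

theorem centralizerProj_X (m n r : ZMod N) :
    centralizerProj N (X N m n r) = if m = n then X N m n r else 0 := by
  rw [centralizerProj_eq_sum]
  rcases eq_or_ne m n with rfl | hmn <;> simp [X_apply, ite_and, *, Ne.symm]

theorem span_centralizerProj :
    Submodule.span ℂ {y : FaceAlg N | ∃ h, y = centralizerProj N h} =
      Submodule.span ℂ {y : FaceAlg N | ∃ i p : ZMod N, y = X N i i p} := by
  apply le_antisymm
  · rw [Submodule.span_le]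
    rintro y ⟨h, rfl⟩
    rw [centralizerProj_eq_sum]
    exact Submodule.sum_mem _ fun i _ => Submodule.sum_mem _ fun p _ =>
      Submodule.smul_mem _ _ (Submodule.subset_span ⟨i, p, rfl⟩)
  · rw [Submodule.span_le]
    rintro y ⟨i, p, rfl⟩
    exact Submodule.subset_span ⟨X N i i p, by rw [centralizerProj_X, if_pos rfl]⟩

theorem epsF_X (i j p : ZMod N) : epsF N (X N i j p) = if p = 0 then 1 else 0 := by
  simp [epsF, X_apply, ite_and, eq_comm]

theorem epsF_zero : epsF N 0 = 0 := by
  simp [epsF]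

theorem etF_X (i s : ZMod N) :
    etF N (X N i i s) = if s = 0 then ∑ p, X N i i p else 0 := by
  rcases eq_or_ne s 0 with rfl | hs <;>
    simp [etF, X_mul_X, apply_ite (epsF N), epsF_X, epsF_zero, ite_and, *]

omit [NeZero N] in
theorem wexp_zero (ω : ℂ) : wexp N ω 0 = 1 := by
  simp [wexp]

theorem wexp_mul_wexp_neg {ω : ℂ} (hω : ω ^ N = 1) (a : ZMod N) :
    wexp N ω a * wexp N ω (-a) = 1 := by
  simp only [wexp, ← AddChar.zmodChar_apply hω, ← AddChar.map_add_eq_mul, add_neg_cancel,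
    AddChar.map_zero_eq_one]

theorem adX_X (i j p c t : ZMod N) :
    adX N i j p (X N c c t) = if p = 0 ∧ c = j then X N i i t else 0 := by
  by_cases hp : p = 0 <;>
    simp [adX, SF_X, X_mul_mul_X, X_apply, eq_sub_iff_add_eq, hp, ite_and]

theorem comulBarX_eq (ω : ℂ) (k s : ZMod N) :
    comulBarX N ω k s = ∑ w, X N k k w ⊗ₜ[ℂ] X N k k (s - w) := by
  simp [comulBarX, adX_X, SF_X, X_mul_X, ite_and, TensorProduct.ite_tmul,
    TensorProduct.tmul_ite, wexp_zero]

theorem SbarX_X {ω : ℂ} (hω : ω ^ N = 1) (k s : ZMod N) :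
    SbarX N ω (X N k k s) = X N k k (-s) := by
  simp only [SbarX, X_mul_X, ite_and, SF_X, ite_mul, zero_mul, apply_ite (SF N), SF_zero,
    mul_ite, mul_zero, smul_ite, smul_zero, Finset.sum_ite_irrel, Finset.sum_const_zero,
    Finset.sum_ite_eq', Finset.mem_univ, if_true]
  simp only [← ite_and]
  have deltas_pin_indices : ∀ i i' j' p' : ZMod N,
      (k = j' + p' ∧ s = -p' ∧ k + s = j' ∧ i - k = i' - j' ∧ j' + p' = i' + p' + s ∧
          i - k = -s) ↔
        (i = k - s ∧ i' = k ∧ j' = k + s ∧ p' = -s) := by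
    grind
  simp only [deltas_pin_indices, ite_and, Finset.sum_ite_irrel, Finset.sum_const_zero,
    Finset.sum_ite_eq', Finset.mem_univ, if_true]
  rw [show k - s + s = k by ring, show k - s - k = -s by ring, show -(s * -s) = s * s by ring,
    show -(-s * (k - (k + s))) = -(s * s) by ring, wexp_mul_wexp_neg hω, one_smul]

theorem face_algebra_transmutation_general
    (N : ℕ) [NeZero N] (ω : ℂ) (hω : IsPrimitiveRoot ω N) :
    -- 1₁ X^m_n(r) S(1₂) = δ_{m,n} X^m_n(r), so C_H(H_s) is spanned by the X^i_i(p)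
    (∀ m n r : ZMod N,
      (∑ i : ZMod N, ∑ p : ZMod N, ∑ q : ZMod N,
          X N i i p * X N m n r * SF N (X N (i + p) (i + p) q)) =
        if m = n then X N m n r else 0)
    ∧ (Submodule.span ℂ {y : FaceAlg N | ∃ h : FaceAlg N,
          y = ∑ i : ZMod N, ∑ p : ZMod N, ∑ q : ZMod N,
              X N i i p * h * SF N (X N (i + p) (i + p) q)} =
        Submodule.span ℂ {y : FaceAlg N | ∃ i p : ZMod N, y = X N i i p})
    -- multiplication and unit
    ∧ (∀ i k p q : ZMod N,
        X N i i p * X N k k q = if i = k ∧ p = q then X N i i p else 0)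
    ∧ ((1 : FaceAlg N) = ∑ i : ZMod N, ∑ p : ZMod N, X N i i p)
    -- the transmutation comultiplication Δ'(X^k_k(s)) = Σ_{w+q=s} X^k_k(w) ⊗ X^k_k(q)
    ∧ (∀ k s : ZMod N,
        comulBarX N ω k s = ∑ w : ZMod N, (X N k k w) ⊗ₜ[ℂ] (X N k k (s - w)))
    -- the counit ε_t(X^i_i(s)) = δ_{s,0} Σ_p X^i_i(p)
    ∧ (∀ i s : ZMod N,
        etF N (X N i i s) = if s = 0 then ∑ p : ZMod N, X N i i p else 0)
    -- the antipode S̄(X^k_k(s)) = X^k_k(-s)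
    ∧ (∀ k s : ZMod N, SbarX N ω (X N k k s) = X N k k (-s)) :=
  ⟨centralizerProj_X, span_centralizerProj, X_diag_mul_X_diag, one_eq_sum_X, comulBarX_eq ω,
    etF_X, SbarX_X hω.pow_eq_one⟩

theorem face_algebra_transmutation
    (N : ℕ) (hN : 2 ≤ N) [NeZero N] (ω : ℂ) (hω : IsPrimitiveRoot ω N) :
    -- 1₁ X^m_n(r) S(1₂) = δ_{m,n} X^m_n(r), so C_H(H_s) is spanned by the X^i_i(p)
    (∀ m n r : ZMod N,
      (∑ i : ZMod N, ∑ p : ZMod N, ∑ q : ZMod N,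
          X N i i p * X N m n r * SF N (X N (i + p) (i + p) q)) =
        if m = n then X N m n r else 0)
    ∧ (Submodule.span ℂ {y : FaceAlg N | ∃ h : FaceAlg N,
          y = ∑ i : ZMod N, ∑ p : ZMod N, ∑ q : ZMod N,
              X N i i p * h * SF N (X N (i + p) (i + p) q)} =
        Submodule.span ℂ {y : FaceAlg N | ∃ i p : ZMod N, y = X N i i p})
    -- multiplication and unit
    ∧ (∀ i k p q : ZMod N,
        X N i i p * X N k k q = if i = k ∧ p = q then X N i i p else 0)
    ∧ ((1 : FaceAlg N) = ∑ i : ZMod N, ∑ p : ZMod N, X N i i p)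
    -- the transmutation comultiplication Δ'(X^k_k(s)) = Σ_{w+q=s} X^k_k(w) ⊗ X^k_k(q)
    ∧ (∀ k s : ZMod N,
        comulBarX N ω k s = ∑ w : ZMod N, (X N k k w) ⊗ₜ[ℂ] (X N k k (s - w)))
    -- the counit ε_t(X^i_i(s)) = δ_{s,0} Σ_p X^i_i(p)
    ∧ (∀ i s : ZMod N,
        etF N (X N i i s) = if s = 0 then ∑ p : ZMod N, X N i i p else 0)
    -- the antipode S̄(X^k_k(s)) = X^k_k(-s)
    ∧ (∀ k s : ZMod N, SbarX N ω (X N k k s) = X N k k (-s)) :=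
  face_algebra_transmutation_general N ω hω
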